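/- arXiv:1801.05993 — 2 statements merged into one kernel-verified Lean document; each statement's English description precedes it below -/
import Mathlib

section
/- Let k₀ > 0, let M ≥ 1, let r₁, …, r_M ∈ ℝ² and c₁, …, c_M ∈ ℂ, and let z ∈ ℝ². Then (1/(2π)) ∫₀^{2π} exp(−i k₀ d(θ)·z) · ( Σ_{m=1}^{M} c_m exp(i k₀ d(θ)·r_m) J₀(k₀ ‖z − r_m‖) ) dθ = Σ_{m=1}^{M} c_m J₀(k₀ ‖z − r_m‖)². In particular, averaging the phase-corrected single-incidence responses over all incident directions replaces each factor J₀(k₀‖z − r_m‖) by its square. -/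
open MeasureTheory Real

/-- Bessel function of the first kind of order zero, defined through its
integral representation `J₀(t) = (1/(2π)) ∫₀^{2π} exp(i t cos θ) dθ`. -/
noncomputable def J₀ (t : ℝ) : ℂ :=
  (1 / (2 * Real.pi) : ℂ) *
    ∫ θ in (0 : ℝ)..(2 * Real.pi), Complex.exp (Complex.I * ((t * Real.cos θ : ℝ) : ℂ))

/-! Writing `(a, b) = R (cos φ, sin φ)` in polar form gives
`a cos θ + b sin θ = R cos (θ - φ)`, and by `2π`-periodicity the shift by `φ` does not change an
integral over a full period. Hence the directional average of `exp (i k₀ d(θ)·(r_m - z))` is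
`J₀ (k₀ ‖z - r_m‖)`; the phase correction `exp (-i k₀ d(θ)·z)` turns the `m`-th term of the response
into exactly this plane wave times `c_m J₀ (k₀ ‖z - r_m‖)`, so averaging squares the Bessel factor. -/

theorem integral_comp_mul_cos_add_mul_sin {E : Type*} [NormedAddCommGroup E] [NormedSpace ℝ E]
    (f : ℝ → E) (a b : ℝ) :
    ∫ θ in (0 : ℝ)..2 * π, f (a * cos θ + b * sin θ) =
      ∫ θ in (0 : ℝ)..2 * π, f (√(a ^ 2 + b ^ 2) * cos θ) := by
  set w : ℂ := ⟨a, b⟩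
  have hnorm : ‖w‖ = √(a ^ 2 + b ^ 2) := by
    rw [Complex.norm_def, Complex.normSq_mk, sq, sq]
  have hshift : ∀ θ, a * cos θ + b * sin θ = ‖w‖ * cos (θ - w.arg) := fun θ => by
    have hre := Complex.norm_mul_cos_arg w
    have him := Complex.norm_mul_sin_arg w
    rw [cos_sub]
    linear_combination (-cos θ) * hre - sin θ * him
  have hper : Function.Periodic (fun θ => f (‖w‖ * cos θ)) (2 * π) := fun θ => by
    simp only [cos_add_two_pi]
  simp_rw [hshift, intervalIntegral.integral_comp_sub_right (fun θ => f (‖w‖ * cos θ)),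
    ← hnorm]
  rw [zero_sub, sub_eq_neg_add]
  simpa using hper.intervalIntegral_add_eq (-w.arg) 0

theorem average_exp_mul_cos_add_mul_sin (a b : ℝ) :
    (1 / (2 * π) : ℂ) * ∫ θ in (0 : ℝ)..2 * π,
        Complex.exp (Complex.I * ((a * cos θ + b * sin θ : ℝ) : ℂ)) = J₀ √(a ^ 2 + b ^ 2) := by
  rw [integral_comp_mul_cos_add_mul_sin (fun t : ℝ => Complex.exp (Complex.I * (t : ℂ))), J₀]

theorem EuclideanSpace.norm_fin_two (x : EuclideanSpace ℝ (Fin 2)) :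
    ‖x‖ = √(x 0 ^ 2 + x 1 ^ 2) := by
  simp [EuclideanSpace.norm_eq, Fin.sum_univ_two]

theorem exp_neg_phase_mul_exp_phase (k z₀ z₁ r₀ r₁ θ : ℝ) :
    Complex.exp (-(Complex.I * ((k * (z₀ * cos θ + z₁ * sin θ) : ℝ) : ℂ))) *
        Complex.exp (Complex.I * ((k * (r₀ * cos θ + r₁ * sin θ) : ℝ) : ℂ)) =
      Complex.exp (Complex.I * ((k * (r₀ - z₀) * cos θ + k * (r₁ - z₁) * sin θ : ℝ) : ℂ)) := by
  rw [← Complex.exp_add]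
  push_cast
  ring_nf

theorem average_phaseCorrected_response_eq_sum_sq_general (k₀ : ℝ) (hk : 0 < k₀)
    (M : ℕ) (r : Fin M → EuclideanSpace ℝ (Fin 2)) (c : Fin M → ℂ)
    (z : EuclideanSpace ℝ (Fin 2)) :
    (1 / (2 * Real.pi) : ℂ) *
        ∫ θ in (0 : ℝ)..(2 * Real.pi),
          Complex.exp (-(Complex.I *
              ((k₀ * (z 0 * Real.cos θ + z 1 * Real.sin θ) : ℝ) : ℂ))) *
            ∑ m, c m *
              Complex.exp (Complex.I *
                ((k₀ * (r m 0 * Real.cos θ + r m 1 * Real.sin θ) : ℝ) : ℂ)) *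
              J₀ (k₀ * ‖z - r m‖)
      = ∑ m, c m * (J₀ (k₀ * ‖z - r m‖)) ^ 2 := by
  have hradius (m : Fin M) :
      √((k₀ * (r m 0 - z 0)) ^ 2 + (k₀ * (r m 1 - z 1)) ^ 2) = k₀ * ‖z - r m‖ := by
    conv_rhs => rw [EuclideanSpace.norm_fin_two, ← sqrt_sq hk.le, ← sqrt_mul (sq_nonneg _)]
    congr 1
    simp only [PiLp.sub_apply]
    ring
  have hterm (θ : ℝ) (m : Fin M) :
      Complex.exp (-(Complex.I * ((k₀ * (z 0 * cos θ + z 1 * sin θ) : ℝ) : ℂ))) *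
          (c m * Complex.exp (Complex.I * ((k₀ * (r m 0 * cos θ + r m 1 * sin θ) : ℝ) : ℂ)) *
            J₀ (k₀ * ‖z - r m‖)) =
        c m * J₀ (k₀ * ‖z - r m‖) * Complex.exp (Complex.I *
          ((k₀ * (r m 0 - z 0) * cos θ + k₀ * (r m 1 - z 1) * sin θ : ℝ) : ℂ)) := by
    rw [← exp_neg_phase_mul_exp_phase]
    ring
  simp_rw [Finset.mul_sum, hterm]
  rw [intervalIntegral.integral_finsetSum fun m _ =>
    Continuous.intervalIntegrable (by fun_prop) _ _, Finset.mul_sum]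
  refine Finset.sum_congr rfl fun m _ => ?_
  rw [intervalIntegral.integral_const_mul, mul_left_comm, average_exp_mul_cos_add_mul_sin,
    hradius, sq, mul_assoc]

/-- Averaging the phase-corrected single-incidence responses over all incident
directions replaces each factor `J₀(k₀‖z − r_m‖)` by its square:
`(1/(2π)) ∫₀^{2π} e^{−i k₀ d(θ)·z} (Σ_m c_m e^{i k₀ d(θ)·r_m} J₀(k₀‖z − r_m‖)) dθ
  = Σ_m c_m J₀(k₀‖z − r_m‖)²`. -/
theorem average_phaseCorrected_response_eq_sum_sq (k₀ : ℝ) (hk : 0 < k₀)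
    (M : ℕ) (hM : 1 ≤ M) (r : Fin M → EuclideanSpace ℝ (Fin 2)) (c : Fin M → ℂ)
    (z : EuclideanSpace ℝ (Fin 2)) :
    (1 / (2 * Real.pi) : ℂ) *
        ∫ θ in (0 : ℝ)..(2 * Real.pi),
          Complex.exp (-(Complex.I *
              ((k₀ * (z 0 * Real.cos θ + z 1 * Real.sin θ) : ℝ) : ℂ))) *
            ∑ m, c m *
              Complex.exp (Complex.I *
                ((k₀ * (r m 0 * Real.cos θ + r m 1 * Real.sin θ) : ℝ) : ℂ)) *
              J₀ (k₀ * ‖z - r m‖)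
      = ∑ m, c m * (J₀ (k₀ * ‖z - r m‖)) ^ 2 :=
  average_phaseCorrected_response_eq_sum_sq_general k₀ hk M r c z
end

section
/- Let k₀ > 0, let M ≥ 1, let r₁, …, r_M ∈ ℝ² and c₁, …, c_M ∈ ℂ, and let z ∈ ℝ². For each integer L ≥ 1 set d_l := (cos(2πl/L), sin(2πl/L)) for l = 1, …, L. Then the quantities (1/L) Σ_{l=1}^{L} exp(−i k₀ d_l·z) · ( Σ_{m=1}^{M} c_m exp(i k₀ d_l·r_m) J₀(k₀ ‖z − r_m‖) ) converge, as L → ∞, to Σ_{m=1}^{M} c_m J₀(k₀ ‖z − r_m‖)². -/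
/-!
Expanding the product, the `m`-th term of the phase-corrected average is
`c_m J₀(k₀‖z - r_m‖)` times the mean of the plane wave `e^{i k₀ d_l·(r_m - z)}` over the `L`
equally spaced directions. That mean is a Riemann sum of the continuous, hence uniformly
continuous, function `θ ↦ e^{i k₀ d(θ)·(r_m - z)}` on `[0, 2π]`, so it tends to the angular mean
of that function. Writing `r_m - z = ρ d(φ)` in polar coordinates gives
`d(θ)·(r_m - z) = ρ cos(θ - φ)`, and by periodicity the shift by `φ` does not change the integral,
which is then the defining integral of `J₀(k₀ρ)`.
-/

open MeasureTheory Real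

open Filter Topology intervalIntegral

section RiemannSum

variable {E : Type*} [NormedAddCommGroup E] [NormedSpace ℝ E] [CompleteSpace E]

theorem norm_integral_sub_smul_right_le {f : ℝ → E} {x y ε : ℝ} (hxy : x ≤ y)
    (hf : IntervalIntegrable f volume x y) (hε : ∀ t ∈ Set.Icc x y, ‖f t - f y‖ ≤ ε) :
    ‖(∫ t in x..y, f t) - (y - x) • f y‖ ≤ ε * (y - x) := by
  rw [← intervalIntegral.integral_const, ← integral_sub hf intervalIntegrable_const,
    ← abs_of_nonneg (sub_nonneg.2 hxy)]
  refine norm_integral_le_of_norm_le_const fun t ht => hε t ?_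
  rw [Set.uIoc_of_le hxy] at ht
  exact Set.Ioc_subset_Icc_self ht

theorem norm_integral_sub_riemannSum_le {f : ℝ → E} {x : ℕ → ℝ} {n : ℕ} {ε : ℝ}
    (hx : Monotone x) (hf : ∀ i < n, IntervalIntegrable f volume (x i) (x (i + 1)))
    (hε : ∀ i < n, ∀ t ∈ Set.Icc (x i) (x (i + 1)), ‖f t - f (x (i + 1))‖ ≤ ε) :
    ‖(∫ t in x 0..x n, f t) - ∑ i ∈ Finset.range n, (x (i + 1) - x i) • f (x (i + 1))‖
      ≤ ε * (x n - x 0) := by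
  rw [← sum_integral_adjacent_intervals hf, ← Finset.sum_sub_distrib,
    ← Finset.sum_range_sub (fun i => x i), Finset.mul_sum]
  refine (norm_sum_le _ _).trans (Finset.sum_le_sum fun i hi => ?_)
  have hi := Finset.mem_range.1 hi
  exact norm_integral_sub_smul_right_le (hx i.le_succ) (hf i hi) (hε i hi)

theorem norm_integral_sub_riemannSum_Icc_one_le {f : ℝ → E} {a b η : ℝ} {L : ℕ} (hab : a ≤ b)
    (hL : L ≠ 0) (hf : ContinuousOn f (Set.Icc a b))
    (hη : ∀ s ∈ Set.Icc a b, ∀ t ∈ Set.Icc a b, dist s t ≤ (b - a) / L → dist (f s) (f t) ≤ η) :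
    ‖(∫ t in a..b, f t) - ((b - a) / L) • ∑ l ∈ Finset.Icc 1 L, f (a + (b - a) * l / L)‖
      ≤ η * (b - a) := by
  have hL0 : (0 : ℝ) < L := by positivity
  set x : ℕ → ℝ := fun i => a + (b - a) * i / L with hx
  have hxmono : Monotone x := fun i j hij => by
    simp only [hx]; gcongr
  have hx0 : x 0 = a := by simp [hx]
  have hxL : x L = b := by simp [hx, hL0.ne']
  have hxstep : ∀ i, x (i + 1) - x i = (b - a) / L := fun i => by
    simp only [hx]; push_cast; ring
  have hcell : ∀ i < L, Set.Icc (x i) (x (i + 1)) ⊆ Set.Icc a b := fun i hi =>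
    Set.Icc_subset_Icc (hx0 ▸ hxmono (Nat.zero_le i)) (hxL ▸ hxmono hi)
  have hsum : ((b - a) / L) • ∑ l ∈ Finset.Icc 1 L, f (a + (b - a) * l / L)
      = ∑ i ∈ Finset.range L, (x (i + 1) - x i) • f (x (i + 1)) := by
    simp only [hxstep, Finset.smul_sum, Finset.range_eq_Ico]
    rw [Finset.sum_Ico_add' (fun i => ((b - a) / L) • f (x i)), zero_add,
      Finset.Ico_add_one_right_eq_Icc]
  rw [hsum, ← hx0, ← hxL]
  refine norm_integral_sub_riemannSum_le hxmono
    (fun i hi => ((hf.mono (hcell i hi)).intervalIntegrable_of_Icc (hxmono i.le_succ)))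
    fun i hi t ht => ?_
  rw [← dist_eq_norm]
  refine hη t (hcell i hi ht) _ (hcell i hi (Set.right_mem_Icc.2 (hxmono i.le_succ))) ?_
  rw [Real.dist_eq, abs_sub_comm, abs_of_nonneg (sub_nonneg.2 ht.2), ← hxstep i]
  linarith [ht.1]

theorem tendsto_riemannSum_Icc_one {f : ℝ → E} {a b : ℝ} (hab : a ≤ b)
    (hf : ContinuousOn f (Set.Icc a b)) :
    Tendsto (fun L : ℕ => ((b - a) / L) • ∑ l ∈ Finset.Icc 1 L, f (a + (b - a) * l / L))
      atTop (𝓝 (∫ t in a..b, f t)) := by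
  rw [Metric.tendsto_atTop]
  intro ε hε
  set η := ε / (b - a + 1) with hη
  have hηε : η * (b - a) < ε := by
    rw [hη, div_mul_eq_mul_div, div_lt_iff₀ (by linarith)]
    nlinarith
  obtain ⟨δ, hδ, hfδ⟩ := Metric.uniformContinuousOn_iff_le.1
    (isCompact_Icc.uniformContinuousOn_of_continuous hf) η (div_pos hε (by linarith))
  obtain ⟨N, hN⟩ := exists_nat_gt ((b - a) / δ)
  refine ⟨N + 1, fun L hL => ?_⟩
  have hmesh : (b - a) / L ≤ δ := by
    rw [div_le_iff₀ (by exact_mod_cast (Nat.succ_pos N).trans_le hL)]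
    have := (div_lt_iff₀ hδ).1 hN
    nlinarith [(show (N : ℝ) + 1 ≤ L by exact_mod_cast hL)]
  rw [dist_comm, dist_eq_norm]
  exact (norm_integral_sub_riemannSum_Icc_one_le hab (by omega) hf
    fun s hs t ht hst => hfδ s hs t ht (hst.trans hmesh)).trans_lt hηε

end RiemannSum

theorem integral_comp_cos_sub {E : Type*} [NormedAddCommGroup E] [NormedSpace ℝ E]
    (g : ℝ → E) (φ : ℝ) :
    ∫ θ in (0 : ℝ)..2 * π, g (Real.cos (θ - φ)) = ∫ θ in (0 : ℝ)..2 * π, g (Real.cos θ) := by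
  have hper : Function.Periodic (fun θ => g (Real.cos θ)) (2 * π) := fun θ => by
    simp only [Real.cos_add_two_pi]
  rw [intervalIntegral.integral_comp_sub_right (fun θ => g (Real.cos θ)), zero_sub,
    sub_eq_neg_add, hper.intervalIntegral_add_eq (-φ) 0, zero_add]

theorem exists_eq_norm_mul_cos_sin (v : EuclideanSpace ℝ (Fin 2)) :
    ∃ φ : ℝ, v 0 = ‖v‖ * Real.cos φ ∧ v 1 = ‖v‖ * Real.sin φ := by
  have hnorm : ‖(⟨v 0, v 1⟩ : ℂ)‖ = ‖v‖ := by
    rw [EuclideanSpace.norm_eq, Fin.sum_univ_two, Complex.norm_def, Complex.normSq_mk]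
    simp only [Real.norm_eq_abs, sq_abs, ← sq]
  refine ⟨Complex.arg ⟨v 0, v 1⟩, ?_, ?_⟩
  · rw [← hnorm, Complex.norm_mul_cos_arg]
  · rw [← hnorm, Complex.norm_mul_sin_arg]

noncomputable def planeWave (k : ℝ) (x : EuclideanSpace ℝ (Fin 2)) (θ : ℝ) : ℂ :=
  Complex.exp (Complex.I * ((k * (x 0 * Real.cos θ + x 1 * Real.sin θ) : ℝ) : ℂ))

theorem continuous_planeWave (k : ℝ) (x : EuclideanSpace ℝ (Fin 2)) :
    Continuous (planeWave k x) := by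
  unfold planeWave; fun_prop

theorem planeWave_sub (k : ℝ) (x y : EuclideanSpace ℝ (Fin 2)) (θ : ℝ) :
    planeWave k (x - y) θ = (planeWave k y θ)⁻¹ * planeWave k x θ := by
  simp only [planeWave, ← Complex.exp_neg, ← Complex.exp_add, PiLp.sub_apply]
  push_cast
  ring_nf

theorem integral_planeWave (k : ℝ) (x : EuclideanSpace ℝ (Fin 2)) :
    (1 / (2 * π) : ℂ) * ∫ θ in (0 : ℝ)..2 * π, planeWave k x θ = J₀ (k * ‖x‖) := by
  obtain ⟨φ, hx0, hx1⟩ := exists_eq_norm_mul_cos_sin x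
  have hphase : ∀ θ, k * (x 0 * Real.cos θ + x 1 * Real.sin θ) = k * ‖x‖ * Real.cos (θ - φ) :=
    fun θ => by rw [hx0, hx1, Real.cos_sub]; ring
  simp only [planeWave, hphase, J₀]
  rw [integral_comp_cos_sub (fun c => Complex.exp (Complex.I * ((k * ‖x‖ * c : ℝ) : ℂ)))]

theorem tendsto_average_planeWave (k : ℝ) (x : EuclideanSpace ℝ (Fin 2)) :
    Tendsto (fun L : ℕ => (1 / (L : ℝ) : ℂ) * ∑ l ∈ Finset.Icc 1 L, planeWave k x (2 * π * l / L))
      atTop (𝓝 (J₀ (k * ‖x‖))) := by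
  have hriemann := (tendsto_riemannSum_Icc_one Real.two_pi_pos.le
    (continuous_planeWave k x).continuousOn).const_mul (1 / (2 * π) : ℂ)
  rw [integral_planeWave] at hriemann
  refine hriemann.congr' ((eventually_ne_atTop 0).mono fun L hL => ?_)
  simp only [sub_zero, zero_add, Complex.real_smul, ← mul_assoc]
  push_cast
  field_simp

theorem tendsto_phaseCorrected_average {ι : Type*} [Fintype ι] (k : ℝ)
    (r : ι → EuclideanSpace ℝ (Fin 2)) (c : ι → ℂ) (z : EuclideanSpace ℝ (Fin 2)) :
    Tendsto (fun L : ℕ => (1 / (L : ℝ) : ℂ) * ∑ l ∈ Finset.Icc 1 L,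
        (planeWave k z (2 * π * l / L))⁻¹ *
          ∑ m, c m * planeWave k (r m) (2 * π * l / L) * J₀ (k * ‖z - r m‖))
      atTop (𝓝 (∑ m, c m * J₀ (k * ‖z - r m‖) ^ 2)) := by
  have hmode : ∀ m, Tendsto (fun L : ℕ => c m * J₀ (k * ‖z - r m‖) *
      ((1 / (L : ℝ) : ℂ) * ∑ l ∈ Finset.Icc 1 L, planeWave k (r m - z) (2 * π * l / L)))
      atTop (𝓝 (c m * J₀ (k * ‖z - r m‖) ^ 2)) := fun m => by
    rw [sq, ← mul_assoc, norm_sub_rev]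
    exact (tendsto_average_planeWave k (r m - z)).const_mul _
  refine (tendsto_finsetSum _ fun m _ => hmode m).congr fun L => ?_
  simp only [planeWave_sub, Finset.mul_sum]
  rw [Finset.sum_comm]
  refine Finset.sum_congr rfl fun l _ => Finset.sum_congr rfl fun m _ => ?_
  ring

theorem tendsto_phaseCorrected_average_to_sum_sq_general (k₀ : ℝ)
    (M : ℕ) (r : Fin M → EuclideanSpace ℝ (Fin 2)) (c : Fin M → ℂ)
    (z : EuclideanSpace ℝ (Fin 2)) :
    Filter.Tendsto
      (fun L : ℕ =>
        (1 / (L : ℝ) : ℂ) *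
          ∑ l ∈ Finset.Icc 1 L,
            Complex.exp (-(Complex.I *
                ((k₀ * (z 0 * Real.cos (2 * Real.pi * l / L)
                      + z 1 * Real.sin (2 * Real.pi * l / L)) : ℝ) : ℂ))) *
              ∑ m, c m *
                Complex.exp (Complex.I *
                  ((k₀ * (r m 0 * Real.cos (2 * Real.pi * l / L)
                        + r m 1 * Real.sin (2 * Real.pi * l / L)) : ℝ) : ℂ)) *
                J₀ (k₀ * ‖z - r m‖))
      Filter.atTop (nhds (∑ m, c m * (J₀ (k₀ * ‖z - r m‖)) ^ 2)) := by
  simpa only [planeWave, ← Complex.exp_neg] using tendsto_phaseCorrected_average k₀ r c z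

/-- With `L` equally spaced incident directions `d_l = (cos(2πl/L), sin(2πl/L))`, the
phase-corrected averages
`(1/L) Σ_{l=1}^{L} e^{−i k₀ d_l·z} (Σ_m c_m e^{i k₀ d_l·r_m} J₀(k₀‖z − r_m‖))`
converge, as `L → ∞`, to `Σ_m c_m J₀(k₀‖z − r_m‖)²` (structure of the
alternative direct sampling indicator, Theorem 2 of the paper). -/
theorem tendsto_phaseCorrected_average_to_sum_sq (k₀ : ℝ) (hk : 0 < k₀)
    (M : ℕ) (hM : 1 ≤ M) (r : Fin M → EuclideanSpace ℝ (Fin 2)) (c : Fin M → ℂ)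
    (z : EuclideanSpace ℝ (Fin 2)) :
    Filter.Tendsto
      (fun L : ℕ =>
        (1 / (L : ℝ) : ℂ) *
          ∑ l ∈ Finset.Icc 1 L,
            Complex.exp (-(Complex.I *
                ((k₀ * (z 0 * Real.cos (2 * Real.pi * l / L)
                      + z 1 * Real.sin (2 * Real.pi * l / L)) : ℝ) : ℂ))) *
              ∑ m, c m *
                Complex.exp (Complex.I *
                  ((k₀ * (r m 0 * Real.cos (2 * Real.pi * l / L)
                        + r m 1 * Real.sin (2 * Real.pi * l / L)) : ℝ) : ℂ)) *
                J₀ (k₀ * ‖z - r m‖))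
      Filter.atTop (nhds (∑ m, c m * (J₀ (k₀ * ‖z - r m‖)) ^ 2)) :=
  tendsto_phaseCorrected_average_to_sum_sq_general k₀ M r c z
end
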